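/- Let S be the unilateral shift on ℓ²(ℕ; ℂ), i.e., the bounded operator with (S f)(0) = 0 and (S f)(n+1) = f(n). Then for every nonempty word w(x, y) in two noncommuting variables (given by a nonempty finite list of Booleans selecting S or S* in each factor), the operator norm satisfies ‖w(S, S*)‖ = 1. -/

import Mathlib

/-! The shift is an isometry, so `‖S*‖ = ‖S‖ ≤ 1` and every word in `S`, `S*` has norm at most `1`.
Conversely, `S` and `S*` move the standard basis vectors along a ladder: `S eₙ = eₙ₊₁` and
`S* eₙ₊₁ = eₙ`. A word of length `k` takes at most `k` steps, so started at `eₖ` it never reaches the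
bottom rung (where `S* e₀ = 0`) and maps the unit vector `eₖ` to some unit vector `eₘ`. -/

open ContinuousLinearMap

/-- Evaluation of a word in two noncommuting letters at the pair `(X, Y)`: the list of
Booleans selects `X` (for `true`) or `Y` (for `false`) in each factor, and the factors
are composed in order. -/
def wordEval {H : Type*} [NormedAddCommGroup H] [InnerProductSpace ℂ H]
    (X Y : H →L[ℂ] H) (w : List Bool) : H →L[ℂ] H :=
  (w.map (fun b => if b then X else Y)).prod

open scoped ENNReal

section Words

variable {H : Type*} [NormedAddCommGroup H] [InnerProductSpace ℂ H] (X Y : H →L[ℂ] H)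

@[simp]
lemma wordEval_cons (b : Bool) (w : List Bool) :
    wordEval X Y (b :: w) = (if b then X else Y) * wordEval X Y w := rfl

variable {X Y}

lemma norm_wordEval_le_one (hX : ‖X‖ ≤ 1) (hY : ‖Y‖ ≤ 1) (w : List Bool) :
    ‖wordEval X Y w‖ ≤ 1 := by
  induction w with
  | nil => exact norm_id_le
  | cons b w ih =>
    have hb : ‖if b then X else Y‖ ≤ 1 := by split_ifs <;> assumption
    exact (norm_mul_le _ _).trans (mul_le_one₀ hb (norm_nonneg _) ih)

lemma exists_wordEval_apply_eq {v : ℕ → H} (hX : ∀ n, X (v n) = v (n + 1))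
    (hY : ∀ n, Y (v (n + 1)) = v n) (w : List Bool) (n : ℕ) :
    ∃ m, n ≤ m ∧ wordEval X Y w (v (n + w.length)) = v m := by
  induction w generalizing n with
  | nil => exact ⟨n, le_rfl, rfl⟩
  | cons b w ih =>
    obtain ⟨m, hnm, hm⟩ := ih (n + 1)
    rw [List.length_cons, ← add_assoc, add_right_comm, wordEval_cons, mul_apply_eq_comp, hm]
    cases b with
    | true => exact ⟨m + 1, by omega, hX m⟩
    | false =>
      obtain ⟨k, rfl⟩ : ∃ k, m = k + 1 := ⟨m - 1, by omega⟩
      exact ⟨k, by omega, hY k⟩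

lemma norm_wordEval_eq_one (hX : ‖X‖ ≤ 1) (hY : ‖Y‖ ≤ 1) {v : ℕ → H} (hv : ∀ n, ‖v n‖ = 1)
    (hXv : ∀ n, X (v n) = v (n + 1)) (hYv : ∀ n, Y (v (n + 1)) = v n) (w : List Bool) :
    ‖wordEval X Y w‖ = 1 := by
  refine (norm_wordEval_le_one hX hY w).antisymm ?_
  obtain ⟨m, -, hm⟩ := exists_wordEval_apply_eq hXv hYv w 0
  calc 1 = ‖wordEval X Y w (v (0 + w.length))‖ := by rw [hm, hv]
    _ ≤ ‖wordEval X Y w‖ := unit_le_opNorm _ _ (hv _).le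

end Words

lemma norm_lp_eq_of_shift {E : Type*} [NormedAddCommGroup E] {p : ℝ≥0∞} (hp : 0 < p.toReal)
    {f g : lp (fun _ : ℕ => E) p} (h0 : g 0 = 0) (hsucc : ∀ n, g (n + 1) = f n) :
    ‖g‖ = ‖f‖ := by
  have hg := (hasSum_nat_add_iff' 1).mpr (lp.hasSum_norm hp g)
  simp only [hsucc, Finset.range_one, Finset.sum_singleton, h0, norm_zero,
    Real.zero_rpow hp.ne', sub_zero] at hg
  exact (Real.rpow_left_inj (lp.norm_nonneg' g) (lp.norm_nonneg' f) hp.ne').mp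
    (hg.unique (lp.hasSum_norm hp f))

section Shift

variable {S : lp (fun _ : ℕ => ℂ) 2 →L[ℂ] lp (fun _ : ℕ => ℂ) 2}
  (hS : ∀ f : lp (fun _ : ℕ => ℂ) 2, S f 0 = 0 ∧ ∀ n, S f (n + 1) = f n)
include hS

lemma norm_shift_le_one : ‖S‖ ≤ 1 :=
  opNorm_le_bound S zero_le_one fun f => by
    rw [norm_lp_eq_of_shift (by norm_num) (hS f).1 (hS f).2, one_mul]

lemma shift_single (n : ℕ) (a : ℂ) : S (lp.single 2 n a) = lp.single 2 (n + 1) a := by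
  ext m
  cases m with
  | zero => simp [(hS _).1]
  | succ m => simp [(hS _).2, lp.single_apply, Pi.single_apply]

lemma adjoint_shift_single_succ (n : ℕ) (a : ℂ) :
    adjoint S (lp.single 2 (n + 1) a) = lp.single 2 n a :=
  ext_inner_right ℂ fun f => by
    rw [adjoint_inner_left, lp.inner_single_left, lp.inner_single_left, (hS f).2 n]

end Shift

theorem norm_word_shift_eq_one_general
    (S : lp (fun _ : ℕ => ℂ) 2 →L[ℂ] lp (fun _ : ℕ => ℂ) 2)
    (hS : ∀ f : lp (fun _ : ℕ => ℂ) 2, S f 0 = 0 ∧ ∀ n, S f (n + 1) = f n)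
    (w : List Bool) :
    ‖wordEval S (adjoint S) w‖ = 1 := by
  have hS_le := norm_shift_le_one hS
  refine norm_wordEval_eq_one hS_le ((adjoint.norm_map S).trans_le hS_le)
    (v := fun n => lp.single 2 n 1) (fun n => ?_) (fun n => shift_single hS n 1)
    (fun n => adjoint_shift_single_succ hS n 1) w
  rw [lp.norm_single (by norm_num), norm_one]

/-- For the unilateral shift `S` on `ℓ²(ℕ)`, every nonempty word in `S` and `S*` has
operator norm `1`. -/
theorem norm_word_shift_eq_one
    (S : lp (fun _ : ℕ => ℂ) 2 →L[ℂ] lp (fun _ : ℕ => ℂ) 2)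
    (hS : ∀ f : lp (fun _ : ℕ => ℂ) 2, S f 0 = 0 ∧ ∀ n, S f (n + 1) = f n)
    (w : List Bool) (hw : w ≠ []) :
    ‖wordEval S (adjoint S) w‖ = 1 :=
  norm_word_shift_eq_one_general S hS w
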